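/- arXiv:0811.2477 — 8 statements merged into one kernel-verified Lean document; each statement's English description precedes it below -/
import Mathlib

section
/- For every natural number n ≥ 1, the identity t_{6x}^2 + t_{6x+1}^2 is a perfect square when 8x^2+4x+1 is a perfect square; concretely: for all natural numbers x and z, if z^2 = 8x^2 + 4x + 1, then T_{6x}^2 + T_{6x+1}^2 = ((3x+1)(6x+1)z)^2, where T_n = n(n+1)(n+2)/6 is the n-th tetrahedral number. -/
/-- The n-th tetrahedral number. -/
def Tet (n : ℕ) : ℕ := n * (n + 1) * (n + 2) / 6

/-! Both tetrahedral numbers share the factor `(3x+1)(6x+1)`: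
`T_{6x} = 2x (3x+1)(6x+1)` and `T_{6x+1} = (2x+1)(3x+1)(6x+1)`. Hence the sum of their squares is
`((3x+1)(6x+1))^2 ((2x)^2 + (2x+1)^2)`, and `(2x)^2 + (2x+1)^2 = 8x^2 + 4x + 1 = z^2`. -/

theorem tet_eq_of_mul_eq {n m : ℕ} (h : n * (n + 1) * (n + 2) = 6 * m) : Tet n = m := by
  rw [Tet, h, Nat.mul_div_cancel_left m (by norm_num)]

theorem tet_six_mul (x : ℕ) : Tet (6 * x) = 2 * x * ((3 * x + 1) * (6 * x + 1)) :=
  tet_eq_of_mul_eq (by ring)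

theorem tet_six_mul_add_one (x : ℕ) :
    Tet (6 * x + 1) = (2 * x + 1) * ((3 * x + 1) * (6 * x + 1)) :=
  tet_eq_of_mul_eq (by ring)

theorem tet_sum_squares_is_square (x z : ℕ) (h : z ^ 2 = 8 * x ^ 2 + 4 * x + 1) :
    Tet (6 * x) ^ 2 + Tet (6 * x + 1) ^ 2 = ((3 * x + 1) * (6 * x + 1) * z) ^ 2 := by
  rw [tet_six_mul, tet_six_mul_add_one, mul_pow _ z, h]
  ring
end

section
/- The Pell-type equation z^2 = 8x^2 + 4x + 1 has infinitely many solutions in natural numbers x, z; in particular, if (x, z) is a solution then so is (17x + 6z + 4, 48x + 17z + 12). -/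
/-!
Completing the square, `z ^ 2 = 8 x ^ 2 + 4 x + 1` is the negative Pell equation
`u ^ 2 - 2 z ^ 2 = -1` with `u = 4 x + 1`. Multiplying `u + z √2` by the norm-one unit
`(1 + √2) ^ 4 = 17 + 12 √2` gives `(17 u + 24 z, 12 u + 17 z)`, which is the map of the statement
written in `x`. It strictly increases both coordinates, so the solution set, being nonempty and
stable under it, has no maximal element and is therefore infinite.
-/

theorem Set.infinite_of_mapsTo_of_lt_apply {α : Type*} [Preorder α] {s : Set α} {f : α → α}
    (hs : s.Nonempty) (hf : Set.MapsTo f s s) (hlt : ∀ a ∈ s, a < f a) : s.Infinite :=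
  fun hfin =>
    let ⟨a, ha⟩ := hfin.exists_maximal hs
    (hlt a ha.1).not_ge (ha.2 (hf ha.1) (hlt a ha.1).le)

/-- The invariance of `z ^ 2 - (8 x ^ 2 + 4 x + 1)` under the step, with both sides moved so that
no subtraction occurs. -/
theorem pell_step_identity (x z : ℕ) :
    (48 * x + 17 * z + 12) ^ 2 + (8 * x ^ 2 + 4 * x + 1) =
      8 * (17 * x + 6 * z + 4) ^ 2 + 4 * (17 * x + 6 * z + 4) + 1 + z ^ 2 := by
  ring

theorem pell_step_solution {x z : ℕ} (h : z ^ 2 = 8 * x ^ 2 + 4 * x + 1) :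
    (48 * x + 17 * z + 12) ^ 2 =
      8 * (17 * x + 6 * z + 4) ^ 2 + 4 * (17 * x + 6 * z + 4) + 1 := by
  linarith [pell_step_identity x z]

theorem pell_type_infinitely_many_solutions :
    {p : ℕ × ℕ | p.2 ^ 2 = 8 * p.1 ^ 2 + 4 * p.1 + 1}.Infinite ∧
    ∀ x z : ℕ, z ^ 2 = 8 * x ^ 2 + 4 * x + 1 →
      (48 * x + 17 * z + 12) ^ 2 =
        8 * (17 * x + 6 * z + 4) ^ 2 + 4 * (17 * x + 6 * z + 4) + 1 := by
  refine ⟨?_, fun x z h => pell_step_solution h⟩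
  refine Set.infinite_of_mapsTo_of_lt_apply
    (f := fun p => (17 * p.1 + 6 * p.2 + 4, 48 * p.1 + 17 * p.2 + 12))
    ⟨(0, 1), rfl⟩ (fun p hp => pell_step_solution hp) fun p _ => ?_
  exact Prod.lt_iff.2 (Or.inl ⟨by omega, by omega⟩)
end

section
/- The equation T_x^2 + T_y^2 = z^2 has infinitely many solutions in positive integers x, y, z with y = x + 1, where T_n denotes the n-th tetrahedral number. -/
theorem tet_three_mul_of_eq {a k : ℕ} (hk : (3 * a + 1) * (3 * a + 2) = 2 * k) :
    Tet (3 * a) = a * k := by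
  have h : 3 * a * (3 * a + 1) * (3 * a + 2) = 6 * (a * k) := by
    rw [mul_assoc, hk]; ring
  rw [Tet, h, Nat.mul_div_cancel_left _ (by norm_num)]

theorem tet_three_mul_add_one_of_eq {a k : ℕ} (hk : (3 * a + 1) * (3 * a + 2) = 2 * k) :
    Tet (3 * a + 1) = (a + 1) * k := by
  have h : (3 * a + 1) * (3 * a + 1 + 1) * (3 * a + 1 + 2) = 6 * ((a + 1) * k) := by
    rw [show (3 * a + 1) * (3 * a + 1 + 1) * (3 * a + 1 + 2)
      = 3 * (a + 1) * ((3 * a + 1) * (3 * a + 2)) by ring, hk]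
    ring
  rw [Tet, h, Nat.mul_div_cancel_left _ (by norm_num)]

theorem tet_sq_add_tet_sq_eq_sq {a b : ℕ} (h : a ^ 2 + (a + 1) ^ 2 = b ^ 2) :
    Tet (3 * a) ^ 2 + Tet (3 * a + 1) ^ 2 = ((3 * a + 1) * (3 * a + 2) / 2 * b) ^ 2 := by
  obtain ⟨k, hk⟩ : 2 ∣ (3 * a + 1) * (3 * a + 2) :=
    (Nat.even_mul_succ_self (3 * a + 1)).two_dvd
  rw [tet_three_mul_of_eq hk, tet_three_mul_add_one_of_eq hk, hk,
    Nat.mul_div_cancel_left _ (by norm_num)]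
  calc (a * k) ^ 2 + ((a + 1) * k) ^ 2 = k ^ 2 * (a ^ 2 + (a + 1) ^ 2) := by ring
    _ = (k * b) ^ 2 := by rw [h]; ring

theorem exists_sq_add_succ_sq_eq_sq (n : ℕ) : ∃ a b, n < a ∧ a ^ 2 + (a + 1) ^ 2 = b ^ 2 := by
  induction n with
  | zero => exact ⟨3, 5, by norm_num, by norm_num⟩
  | succ n ih =>
    obtain ⟨a, b, hna, hab⟩ := ih
    refine ⟨3 * a + 2 * b + 1, 4 * a + 3 * b + 2, by omega, ?_⟩
    nlinarith [hab]

theorem tet_consecutive_sum_squares_infinite :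
    {p : ℕ × ℕ × ℕ | 0 < p.1 ∧ 0 < p.2.1 ∧ 0 < p.2.2 ∧ p.2.1 = p.1 + 1 ∧
      Tet p.1 ^ 2 + Tet p.2.1 ^ 2 = p.2.2 ^ 2}.Infinite := by
  refine Set.Infinite.of_image Prod.fst (Set.infinite_of_forall_exists_gt fun n => ?_)
  obtain ⟨a, b, hna, hab⟩ := exists_sq_add_succ_sq_eq_sq n
  have hb : 0 < b := by nlinarith
  have hk : 0 < (3 * a + 1) * (3 * a + 2) / 2 := Nat.div_pos (by nlinarith) (by norm_num)
  refine ⟨3 * a, ⟨(3 * a, 3 * a + 1, (3 * a + 1) * (3 * a + 2) / 2 * b), ?_, rfl⟩, by omega⟩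
  exact ⟨Nat.mul_pos three_pos (by omega), Nat.succ_pos _, Nat.mul_pos hk hb, rfl,
    tet_sq_add_tet_sq_eq_sq hab⟩
end

section
/- For all rational u, v with v ≠ 0 and u ≠ v, setting x = u(u^2 - 2uv + 3v^2)/((u-v)^2 v), y = (u+v)(u^2 - 2uv + 3v^2)/(2(u-v)v^2), z = (u^4 - 2u^3 v + 2u^2 v^2 + 2uv^3 + v^4)/(2(u-v)^2 v^2), we have t_x^2 + t_y^2 = t_z^2, where t_w = w(w+1)/2. -/
/-- The triangular number function extended to the rationals. -/
def tri (w : ℚ) : ℚ := w * (w + 1) / 2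

theorem rational_param_triangular_pythagoras (u v : ℚ) (hv : v ≠ 0) (huv : u ≠ v) :
    tri (u * (u ^ 2 - 2 * u * v + 3 * v ^ 2) / ((u - v) ^ 2 * v)) ^ 2 +
    tri ((u + v) * (u ^ 2 - 2 * u * v + 3 * v ^ 2) / (2 * (u - v) * v ^ 2)) ^ 2 =
    tri ((u ^ 4 - 2 * u ^ 3 * v + 2 * u ^ 2 * v ^ 2 + 2 * u * v ^ 3 + v ^ 4) /
      (2 * (u - v) ^ 2 * v ^ 2)) ^ 2 := by
  have huv' : u - v ≠ 0 := sub_ne_zero.mpr huv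
  simp only [tri]
  field_simp
  ring
end

section
/- There exists an infinite sequence of triples (x_n, y_n, z_n) of positive integers satisfying T_{x_n}^2 + T_{y_n}^2 = z_n^2 such that y_n - x_n tends to infinity. -/
/-!
Take solutions of the negative Pell equation `a² + 1 = 2b²` and put `x = ab - 1`, `y = a² - 1`.
Then `6 T_x = (ab)³ - ab = ab(b² - 1)(2b² + 1)` and `6 T_y = (a²)³ - a² = 4a²b²(b² - 1)`, so
`(6 T_x)² + (6 T_y)² = a²b²(b² - 1)²((2b² + 1)² + 16a²b²) = (ab(b² - 1)(6b² - 1))²`,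
and `36 ∣ w²` forces `6 ∣ w`, so `T_x² + T_y²` is a square.
The Pell solutions `(a, b) ↦ (3a + 4b, 2a + 3b)` grow, and so does the gap `y - x = a(a - b)`.
-/

theorem tet_mul_six (n : ℕ) : Tet n * 6 = n * (n + 1) * (n + 2) := by
  have h : (n + 2).descFactorial 3 = n * (n + 1) * (n + 2) := by
    simp [Nat.descFactorial_succ]; ring
  exact Nat.div_mul_cancel (h ▸ Nat.factorial_dvd_descFactorial (n + 2) 3)

theorem tet_pos {n : ℕ} (hn : 0 < n) : 0 < Tet n :=
  Nat.pos_of_mul_pos_right (a := Tet n) (b := 6) (tet_mul_six n ▸ by positivity)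

theorem tet_sub_one_mul_six (m : ℕ) : (Tet (m - 1) : ℤ) * 6 = (m : ℤ) ^ 3 - m := by
  rcases m with _ | m
  · simp [Tet]
  · have h : ((Tet m * 6 : ℕ) : ℤ) = _ := congrArg Nat.cast (tet_mul_six m)
    push_cast at h ⊢
    linear_combination h

theorem cube_sub_sq_add_cube_sub_sq_of_sq_add_one_eq {R : Type*} [CommRing R] {a b : R}
    (h : a ^ 2 + 1 = 2 * b ^ 2) :
    ((a * b) ^ 3 - a * b) ^ 2 + ((a ^ 2) ^ 3 - a ^ 2) ^ 2 =
      (a * b * (b ^ 2 - 1) * (6 * b ^ 2 - 1)) ^ 2 := by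
  have hx : (a * b) ^ 3 - a * b = a * b * (b ^ 2 - 1) * (2 * b ^ 2 + 1) := by
    linear_combination a * b ^ 3 * h
  have hy : (a ^ 2) ^ 3 - a ^ 2 = 4 * a ^ 2 * b ^ 2 * (b ^ 2 - 1) := by
    linear_combination a ^ 2 * (a ^ 2 + 2 * b ^ 2 - 1) * h
  rw [hx, hy]
  linear_combination 16 * a ^ 2 * b ^ 4 * (b ^ 2 - 1) ^ 2 * h

theorem Int.exists_sq_add_sq_eq_sq_of_mul {c p q w : ℤ} (hc : c ≠ 0)
    (h : (c * p) ^ 2 + (c * q) ^ 2 = w ^ 2) : ∃ z, p ^ 2 + q ^ 2 = z ^ 2 := by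
  obtain ⟨z, rfl⟩ : c ∣ w :=
    (Int.pow_dvd_pow_iff two_ne_zero).1 ⟨p ^ 2 + q ^ 2, by rw [← h]; ring⟩
  exact ⟨z, mul_left_cancel₀ (pow_ne_zero 2 hc) (by linear_combination h)⟩

theorem exists_tet_sq_add_tet_sq_eq_sq {a b : ℕ} (h : a ^ 2 + 1 = 2 * b ^ 2) (hb : 2 ≤ b) :
    ∃ z, 0 < z ∧ Tet (a * b - 1) ^ 2 + Tet (a ^ 2 - 1) ^ 2 = z ^ 2 := by
  have key := cube_sub_sq_add_cube_sub_sq_of_sq_add_one_eq (a := (a : ℤ)) (b := b)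
    (by exact_mod_cast h)
  have hx := tet_sub_one_mul_six (a * b)
  have hy := tet_sub_one_mul_six (a ^ 2)
  push_cast at hx hy
  rw [← hx, ← hy, mul_comm _ (6 : ℤ), mul_comm _ (6 : ℤ)] at key
  obtain ⟨z, hz⟩ := Int.exists_sq_add_sq_eq_sq_of_mul (by norm_num) key
  have hz' : Tet (a * b - 1) ^ 2 + Tet (a ^ 2 - 1) ^ 2 = z.natAbs ^ 2 := by
    zify; rw [sq_abs]; exact hz
  have hb_sq : 4 ≤ b ^ 2 := by nlinarith
  have hy_pos : 0 < Tet (a ^ 2 - 1) := tet_pos (by omega)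
  refine ⟨z.natAbs, Nat.pos_of_ne_zero fun h0 => ?_, hz'⟩
  simp [h0] at hz'
  omega

theorem exists_tet_sq_add_tet_sq_gap_tendsto_atTop (a b : ℕ → ℕ)
    (h : ∀ n, a n ^ 2 + 1 = 2 * b n ^ 2) (hb : ∀ n, 2 ≤ b n) (hab : ∀ n, b n + n ≤ a n) :
    ∃ x y z : ℕ → ℕ,
      (∀ n, 0 < x n ∧ 0 < y n ∧ 0 < z n ∧ Tet (x n) ^ 2 + Tet (y n) ^ 2 = z n ^ 2) ∧
      Filter.Tendsto (fun n => (y n : ℤ) - (x n : ℤ)) Filter.atTop Filter.atTop := by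
  choose z hz using fun n => exists_tet_sq_add_tet_sq_eq_sq (h n) (hb n)
  have hab_le (n : ℕ) : 4 ≤ a n * b n := by nlinarith [hb n, hab n]
  have hsq_le (n : ℕ) : a n * b n ≤ a n ^ 2 := by nlinarith [hab n]
  refine ⟨fun n => a n * b n - 1, fun n => a n ^ 2 - 1, z,
    fun n => ⟨by grind, by grind, hz n⟩, ?_⟩
  refine Filter.tendsto_atTop_mono (fun n => ?_) tendsto_natCast_atTop_atTop
  have hgap : (n : ℤ) ≤ (a n : ℤ) ^ 2 - a n * b n := by
    have := hab n; have := hb n; zify at *; nlinarith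
  push_cast [Nat.cast_sub (by grind : 1 ≤ a n * b n), Nat.cast_sub (by grind : 1 ≤ a n ^ 2)]
  linarith

/-- `a + b√2 = (1 + √2) ^ (2n + 1)`, so that `a² - 2b² = -1`. -/
def negPell : ℕ → ℕ × ℕ
  | 0 => (1, 1)
  | n + 1 => (3 * (negPell n).1 + 4 * (negPell n).2, 2 * (negPell n).1 + 3 * (negPell n).2)

theorem negPell_sq_add_one (n : ℕ) : (negPell n).1 ^ 2 + 1 = 2 * (negPell n).2 ^ 2 := by
  induction n with
  | zero => rfl
  | succ n ih => simp only [negPell]; linear_combination ih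

theorem negPell_snd_pos (n : ℕ) : 0 < (negPell n).2 := by
  induction n with
  | zero => decide
  | succ n ih => simp only [negPell]; omega

theorem negPell_snd_add_le_fst (n : ℕ) : (negPell n).2 + n ≤ (negPell n).1 := by
  induction n with
  | zero => rfl
  | succ n ih => simp only [negPell]; have := negPell_snd_pos n; omega

theorem tet_sum_squares_gap_to_infinity :
    ∃ x y z : ℕ → ℕ,
      (∀ n, 0 < x n ∧ 0 < y n ∧ 0 < z n ∧
        Tet (x n) ^ 2 + Tet (y n) ^ 2 = z n ^ 2) ∧
      Filter.Tendsto (fun n => (y n : ℤ) - (x n : ℤ)) Filter.atTop Filter.atTop :=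
  exists_tet_sq_add_tet_sq_gap_tendsto_atTop (fun n => (negPell (n + 1)).1)
    (fun n => (negPell (n + 1)).2) (fun n => negPell_sq_add_one (n + 1))
    (fun n => by simp only [negPell]; have := negPell_snd_pos n; omega)
    (fun n => by have := negPell_snd_add_le_fst (n + 1); omega)
end

section
/- For integers f(x,y) = x^2 - x + y^2 - y - 4xy, the identity f(x, y) = f(y, 4y - x + 1) holds for all integers x, y, and f(1, 5) = 0; hence f(x,y) = 0 has infinitely many positive integer solutions. -/
/-!
Vieta jumping: for fixed `y`, the form is monic quadratic in `x`, with `x` and `4y - x + 1`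
as the two roots, so the step `(x, y) ↦ (y, 4y - x + 1)` preserves it. Starting from the
solution `(1, 5)`, the step keeps `0 < x < y` and strictly increases `x`, so a finite set of
positive solutions closed under it would have no largest first coordinate.
-/

open Set

theorem Set.infinite_of_mapsTo_of_lt {α β : Type*} [LinearOrder β] {s : Set α} {f : α → α}
    {g : α → β} (hs : s.Nonempty) (hf : MapsTo f s s) (hg : ∀ a ∈ s, g a < g (f a)) :
    s.Infinite := fun hfin => by
  obtain ⟨a, ha, hmax⟩ := s.exists_max_image g hfin hs
  exact (hg a ha).not_ge (hmax (f a) (hf ha))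

section VietaJump

variable {R : Type*} [CommRing R]

def quadForm (x y : R) : R := x ^ 2 - x + y ^ 2 - y - 4 * x * y

def vietaStep (p : R × R) : R × R := (p.2, 4 * p.2 - p.1 + 1)

theorem quadForm_vietaStep (x y : R) : quadForm y (4 * y - x + 1) = quadForm x y := by
  unfold quadForm
  ring

variable [LinearOrder R]

variable (R) in
def increasingSolutions : Set (R × R) := {p | 0 < p.1 ∧ p.1 < p.2 ∧ quadForm p.1 p.2 = 0}

theorem fst_lt_fst_vietaStep {p : R × R} (hp : p ∈ increasingSolutions R) :
    p.1 < (vietaStep p).1 :=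
  hp.2.1

theorem mapsTo_vietaStep_increasingSolutions [IsStrictOrderedRing R] :
    MapsTo vietaStep (increasingSolutions R) (increasingSolutions R) := by
  rintro ⟨x, y⟩ ⟨hx, hxy, hxy0⟩
  have hy : y < 4 * y - x + 1 := by
    dsimp only at hx hxy
    linarith
  exact ⟨hx.trans hxy, hy, (quadForm_vietaStep x y).trans hxy0⟩

end VietaJump

theorem f_identity_and_infinitude :
    (∀ x y : ℤ, x ^ 2 - x + y ^ 2 - y - 4 * x * y =
      y ^ 2 - y + (4 * y - x + 1) ^ 2 - (4 * y - x + 1) - 4 * y * (4 * y - x + 1)) ∧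
    ((1 : ℤ) ^ 2 - 1 + 5 ^ 2 - 5 - 4 * 1 * 5 = 0) ∧
    {p : ℤ × ℤ | 0 < p.1 ∧ 0 < p.2 ∧
      p.1 ^ 2 - p.1 + p.2 ^ 2 - p.2 - 4 * p.1 * p.2 = 0}.Infinite := by
  have hseed : ((1, 5) : ℤ × ℤ) ∈ increasingSolutions ℤ := by
    norm_num [increasingSolutions, quadForm]
  have hinf : (increasingSolutions ℤ).Infinite :=
    infinite_of_mapsTo_of_lt ⟨_, hseed⟩ mapsTo_vietaStep_increasingSolutions
      fun _ => fst_lt_fst_vietaStep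
  refine ⟨fun x y => (quadForm_vietaStep x y).symm, hseed.2.2, hinf.mono ?_⟩
  rintro p ⟨hp1, hp12, hp⟩
  exact ⟨hp1, hp1.trans hp12, hp⟩
end

section
/- For every natural number u ≥ 2 with u ≡ 1 or 2 (mod 3), one has (T_{(u^2-1)/3} + T_{(2u^2-5)/3})/2 = T_{u-1}^2, i.e., T_{(u^2-1)/3}, T_{u-1}^2, T_{(2u^2-5)/3} form a three-term arithmetic progression; here T_n = n(n+1)(n+2)/6. -/
theorem six_mul_tet (n : ℕ) : 6 * Tet n = n * (n + 1) * (n + 2) := by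
  have h := Nat.descFactorial_eq_factorial_mul_choose (n + 2) 3
  simp only [Nat.descFactorial_succ, Nat.descFactorial_zero, Nat.factorial, Nat.add_sub_cancel,
    Nat.add_succ_sub_one, Nat.sub_zero] at h
  unfold Tet
  rw [Nat.mul_div_cancel' ⟨_, by rw [← h]; ring⟩]

theorem cast_tet (n : ℕ) : (Tet n : ℚ) = n * (n + 1) * (n + 2) / 6 := by
  rw [eq_div_iff (by norm_num), mul_comm]
  exact_mod_cast six_mul_tet n

theorem tet_add_tet_two_mul_sub_one {a c : ℕ} (h : 3 * a + 1 = (c + 1) ^ 2) :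
    Tet a + Tet (2 * a - 1) = 2 * Tet c ^ 2 := by
  rcases Nat.eq_zero_or_pos a with rfl | ha
  · obtain rfl : c = 0 := by nlinarith
    rfl
  have hq : (3 * a + 1 : ℚ) = (c + 1) ^ 2 := by exact_mod_cast h
  have ha' : (a : ℚ) = ((c + 1) ^ 2 - 1) / 3 := by linear_combination hq / 3
  qify
  rw [cast_tet, cast_tet, cast_tet, Nat.cast_sub (by omega)]
  push_cast
  rw [ha']
  ring

theorem tet_arithmetic_progression_general (u : ℕ)
    (hmod : u % 3 = 1 ∨ u % 3 = 2) :
    Tet ((u ^ 2 - 1) / 3) + Tet ((2 * u ^ 2 - 5) / 3) = 2 * Tet (u - 1) ^ 2 := by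
  obtain ⟨c, rfl⟩ : ∃ c, u = c + 1 := ⟨u - 1, by omega⟩
  have hsq : (c + 1) ^ 2 % 3 = 1 := by
    rcases hmod with h | h <;> simp [Nat.pow_mod, h]
  have hb : (2 * (c + 1) ^ 2 - 5) / 3 = 2 * (((c + 1) ^ 2 - 1) / 3) - 1 := by omega
  rw [hb, Nat.add_sub_cancel]
  exact tet_add_tet_two_mul_sub_one (by omega)

theorem tet_arithmetic_progression (u : ℕ) (hu : 2 ≤ u)
    (hmod : u % 3 = 1 ∨ u % 3 = 2) :
    Tet ((u ^ 2 - 1) / 3) + Tet ((2 * u ^ 2 - 5) / 3) = 2 * Tet (u - 1) ^ 2 :=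
  tet_arithmetic_progression_general u hmod
end

section
/- For every integer w, (130w^2 - 128w + 33)^2 = 4(60w^2 - 61w + 16)^2 + 4(5w - 2)^4 + 1; consequently, whenever 60w^2 - 61w + 16 = v^2 is a perfect square, the triple x = v, y = 5w - 2 (suitably nonnegative), z = 65w^2 - 64w + 16 satisfies t_z = (x^4 + y^4)/2, where t_z = z(z+1)/2. -/
/-- The triangular number function on the integers, valued in ℚ. -/
def triQ (z : ℤ) : ℚ := z * (z + 1) / 2

theorem sq_eq_four_mul_sq_add_four_mul_pow_four_add_one {R : Type*} [CommRing R] (w : R) :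
    (130 * w ^ 2 - 128 * w + 33) ^ 2 =
      4 * (60 * w ^ 2 - 61 * w + 16) ^ 2 + 4 * (5 * w - 2) ^ 4 + 1 := by
  ring

-- Because `8 * t_z + 1 = (2 * z + 1) ^ 2`.
theorem triQ_eq_of_two_mul_add_one_sq {z x y : ℤ} (h : (2 * z + 1) ^ 2 = 4 * x ^ 4 + 4 * y ^ 4 + 1) :
    triQ z = ((x : ℚ) ^ 4 + (y : ℚ) ^ 4) / 2 := by
  have hℚ : ((2 * z + 1 : ℤ) : ℚ) ^ 2 = ((4 * x ^ 4 + 4 * y ^ 4 + 1 : ℤ) : ℚ) := by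
    exact_mod_cast h
  push_cast at hℚ
  unfold triQ
  linear_combination hℚ / 8

theorem fourth_power_progression_identity :
    (∀ w : ℤ, (130 * w ^ 2 - 128 * w + 33) ^ 2 =
      4 * (60 * w ^ 2 - 61 * w + 16) ^ 2 + 4 * (5 * w - 2) ^ 4 + 1) ∧
    (∀ w v : ℤ, 60 * w ^ 2 - 61 * w + 16 = v ^ 2 →
      triQ (65 * w ^ 2 - 64 * w + 16) =
        ((v : ℚ) ^ 4 + ((5 * w - 2 : ℤ) : ℚ) ^ 4) / 2) := by
  refine ⟨sq_eq_four_mul_sq_add_four_mul_pow_four_add_one, fun w v hv => ?_⟩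
  apply triQ_eq_of_two_mul_add_one_sq
  have key := sq_eq_four_mul_sq_add_four_mul_pow_four_add_one w
  rw [hv] at key
  linear_combination key
end
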